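/- arXiv:2109.08810 — 2 statements merged into one kernel-verified Lean document; each statement's English description precedes it below -/
import Mathlib

section
/- The function h : ℝ → ℝ defined by h(t) = f(t)/f'(t) = f(t)·(1 + 2·f(t)²)^(1/2) is differentiable on ℝ with h'(t) = (1 + 4·f(t)²)/(1 + 2·f(t)²), one has 1 ≤ h'(t) ≤ 2 for all t ∈ ℝ, and consequently |f(t)/f'(t)| ≤ 2·|t| for all t ∈ ℝ. -/
/-!
Differentiating `h = f·√(1 + 2f²)` with `f' = 1/√(1 + 2f²)` gives
`h' = (1 + 4f²)/(1 + 2f²) ∈ [1, 2]`; since `h(0) = 0`, the mean value inequality yields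
`|h(t)| ≤ 2|t|`.
-/

open Real

lemma hasDerivAt_mul_sqrt_one_add_two_mul_sq {g : ℝ → ℝ} {g' t : ℝ} (hg : HasDerivAt g g' t) :
    HasDerivAt (fun s => g s * √(1 + 2 * g s ^ 2))
      (g' * (1 + 4 * g t ^ 2) / √(1 + 2 * g t ^ 2)) t := by
  have hpos : 0 < 1 + 2 * g t ^ 2 := by positivity
  have hinner : HasDerivAt (fun s => 1 + 2 * g s ^ 2) (2 * (2 * g t * g')) t := by
    simpa using ((hg.pow 2).const_mul 2).const_add 1
  refine (hg.mul ((hasDerivAt_sqrt hpos.ne').comp t hinner)).congr_deriv ?_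
  have hsqrt_sq : √(1 + 2 * g t ^ 2) ^ 2 = 1 + 2 * g t ^ 2 := sq_sqrt hpos.le
  have hne : √(1 + 2 * g t ^ 2) ≠ 0 := (sqrt_pos.2 hpos).ne'
  rw [Function.comp_apply]
  field_simp
  linear_combination g' * hsqrt_sq

lemma one_le_one_add_four_mul_sq_div (x : ℝ) : 1 ≤ (1 + 4 * x ^ 2) / (1 + 2 * x ^ 2) := by
  rw [le_div_iff₀ (by positivity)]
  nlinarith [sq_nonneg x]

lemma one_add_four_mul_sq_div_le_two (x : ℝ) : (1 + 4 * x ^ 2) / (1 + 2 * x ^ 2) ≤ 2 := by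
  rw [div_le_iff₀ (by positivity)]
  nlinarith [sq_nonneg x]

theorem stmt_8_general (f : ℝ → ℝ) (hf0 : f 0 = 0)
    (hf' : ∀ t : ℝ, HasDerivAt f (1 / Real.sqrt (1 + 2 * f t ^ 2)) t) :
    (∀ t : ℝ, f t / deriv f t = f t * Real.sqrt (1 + 2 * f t ^ 2)) ∧
    (∀ t : ℝ, HasDerivAt (fun s => f s * Real.sqrt (1 + 2 * f s ^ 2))
      ((1 + 4 * f t ^ 2) / (1 + 2 * f t ^ 2)) t) ∧
    (∀ t : ℝ, 1 ≤ (1 + 4 * f t ^ 2) / (1 + 2 * f t ^ 2) ∧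
      (1 + 4 * f t ^ 2) / (1 + 2 * f t ^ 2) ≤ 2) ∧
    (∀ t : ℝ, |f t / deriv f t| ≤ 2 * |t|) := by
  have hquot (t : ℝ) : f t / deriv f t = f t * √(1 + 2 * f t ^ 2) := by
    rw [(hf' t).deriv, div_div_eq_mul_div, div_one]
  have hderiv (t : ℝ) : HasDerivAt (fun s => f s * √(1 + 2 * f s ^ 2))
      ((1 + 4 * f t ^ 2) / (1 + 2 * f t ^ 2)) t := by
    convert hasDerivAt_mul_sqrt_one_add_two_mul_sq (hf' t) using 1
    rw [one_div_mul_eq_div, div_div, ← sq, sq_sqrt (by positivity)]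
  refine ⟨hquot, hderiv, fun t => ⟨one_le_one_add_four_mul_sq_div _,
    one_add_four_mul_sq_div_le_two _⟩, fun t => ?_⟩
  have hslope (s : ℝ) : ‖(1 + 4 * f s ^ 2) / (1 + 2 * f s ^ 2)‖ ≤ 2 := by
    rw [norm_eq_abs, abs_of_nonneg (zero_le_one.trans (one_le_one_add_four_mul_sq_div _))]
    exact one_add_four_mul_sq_div_le_two _
  have hmvt := convex_univ.norm_image_sub_le_of_norm_hasDerivWithin_le
    (fun s _ => (hderiv s).hasDerivWithinAt) (fun s _ => hslope s) (Set.mem_univ 0) (Set.mem_univ t)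
  simpa [hquot, hf0] using hmvt

/-- The function `h(t) = f(t)/f'(t) = f(t)·√(1+2f(t)²)` is differentiable with
`h'(t) = (1+4f(t)²)/(1+2f(t)²)`, one has `1 ≤ h'(t) ≤ 2`, and `|f(t)/f'(t)| ≤ 2|t|`. -/
theorem stmt_8 (f : ℝ → ℝ) (hf0 : f 0 = 0)
    (hfodd : ∀ t : ℝ, f (-t) = -f t)
    (hf' : ∀ t : ℝ, HasDerivAt f (1 / Real.sqrt (1 + 2 * f t ^ 2)) t) :
    (∀ t : ℝ, f t / deriv f t = f t * Real.sqrt (1 + 2 * f t ^ 2)) ∧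
    (∀ t : ℝ, HasDerivAt (fun s => f s * Real.sqrt (1 + 2 * f s ^ 2))
      ((1 + 4 * f t ^ 2) / (1 + 2 * f t ^ 2)) t) ∧
    (∀ t : ℝ, 1 ≤ (1 + 4 * f t ^ 2) / (1 + 2 * f t ^ 2) ∧
      (1 + 4 * f t ^ 2) / (1 + 2 * f t ^ 2) ≤ 2) ∧
    (∀ t : ℝ, |f t / deriv f t| ≤ 2 * |t|) :=
  stmt_8_general f hf0 hf'
end

section
/- For every t ≠ 0 one has 1/2 ≤ t·f'(t)/f(t) ≤ 1; consequently, for all t ≠ 0 and s ≠ 0, t·f'(t)/f(t) ≤ 2·s·f'(s)/f(s). -/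
/-!
Put `F = f · √(1 + 2 f²)`. Since `f' = 1 / √(1 + 2 f²)`, one has `t f'(t) / f(t) = t / F(t)`, and
`F' = (1 + 4 f²) / (1 + 2 f²)` takes values in `[1, 2]`. As `F(0) = 0`, the mean value theorem
writes `F(t) / t` as a value of `F'`, so `t / F(t) ∈ [1/2, 1]`.
-/

open Real

lemma exists_hasDerivAt_eq_div_self {g g' : ℝ → ℝ} (hg : ∀ x, HasDerivAt g (g' x) x)
    (hg0 : g 0 = 0) {t : ℝ} (ht : t ≠ 0) : ∃ c, g' c = g t / t := by
  have hcont : Continuous g := continuous_iff_continuousAt.2 fun x => (hg x).continuousAt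
  rcases ht.lt_or_gt with ht | ht
  · obtain ⟨c, -, hc⟩ :=
      exists_hasDerivAt_eq_slope g g' ht hcont.continuousOn fun x _ => hg x
    exact ⟨c, by rw [hc, hg0, zero_sub, zero_sub, neg_div_neg_eq]⟩
  · obtain ⟨c, -, hc⟩ :=
      exists_hasDerivAt_eq_slope g g' ht hcont.continuousOn fun x _ => hg x
    exact ⟨c, by rw [hc, hg0, sub_zero, sub_zero]⟩

lemma hasDerivAt_mul_sqrt_one_add_two_mul_sq_s11 {f : ℝ → ℝ} {x : ℝ}
    (hf : HasDerivAt f (1 / √(1 + 2 * f x ^ 2)) x) :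
    HasDerivAt (fun y => f y * √(1 + 2 * f y ^ 2))
      ((1 + 4 * f x ^ 2) / (1 + 2 * f x ^ 2)) x := by
  have hpos : 0 < 1 + 2 * f x ^ 2 := by positivity
  have hinner : HasDerivAt (fun y => 1 + 2 * f y ^ 2)
      (2 * (2 * f x ^ 1 * (1 / √(1 + 2 * f x ^ 2)))) x :=
    ((hf.pow 2).const_mul 2).const_add 1
  refine HasDerivAt.congr_deriv (hf.mul (hinner.sqrt hpos.ne')) ?_
  field_simp
  rw [sq_sqrt hpos.le]
  ring

lemma one_add_two_mul_sq_div_one_add_four_mul_sq_mem_Icc (a : ℝ) :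
    (1 + 2 * a ^ 2) / (1 + 4 * a ^ 2) ∈ Set.Icc (1 / 2) 1 := by
  have hpos : 0 < 1 + 4 * a ^ 2 := by positivity
  constructor
  · rw [le_div_iff₀ hpos]; linarith
  · rw [div_le_one hpos]; nlinarith [sq_nonneg a]

theorem stmt_11_general (f : ℝ → ℝ) (hf0 : f 0 = 0)
    (hf' : ∀ t : ℝ, HasDerivAt f (1 / Real.sqrt (1 + 2 * f t ^ 2)) t) :
    (∀ t : ℝ, t ≠ 0 → 1 / 2 ≤ t * deriv f t / f t ∧ t * deriv f t / f t ≤ 1) ∧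
    (∀ t s : ℝ, t ≠ 0 → s ≠ 0 →
      t * deriv f t / f t ≤ 2 * (s * deriv f s / f s)) := by
  have ratio_mem : ∀ t : ℝ, t ≠ 0 →
      1 / 2 ≤ t * deriv f t / f t ∧ t * deriv f t / f t ≤ 1 := by
    intro t ht
    obtain ⟨c, hc⟩ := exists_hasDerivAt_eq_div_self
      (fun x => hasDerivAt_mul_sqrt_one_add_two_mul_sq_s11 (hf' x)) (by simp [hf0]) ht
    have hratio : t * deriv f t / f t = (1 + 2 * f c ^ 2) / (1 + 4 * f c ^ 2) := by
      calc t * deriv f t / f t = (f t * √(1 + 2 * f t ^ 2) / t)⁻¹ := by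
            rw [(hf' t).deriv, inv_div, mul_one_div, div_div, mul_comm]
        _ = (1 + 2 * f c ^ 2) / (1 + 4 * f c ^ 2) := by rw [← hc, inv_div]
    rw [hratio]
    exact one_add_two_mul_sq_div_one_add_four_mul_sq_mem_Icc (f c)
  refine ⟨ratio_mem, fun t s ht hs => ?_⟩
  linarith [(ratio_mem t ht).2, (ratio_mem s hs).1]

/-- For every `t ≠ 0`, `1/2 ≤ t f'(t)/f(t) ≤ 1`; consequently, for all `t, s ≠ 0`,
`t f'(t)/f(t) ≤ 2 s f'(s)/f(s)`. -/
theorem stmt_11 (f : ℝ → ℝ) (hf0 : f 0 = 0)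
    (hfodd : ∀ t : ℝ, f (-t) = -f t)
    (hf' : ∀ t : ℝ, HasDerivAt f (1 / Real.sqrt (1 + 2 * f t ^ 2)) t) :
    (∀ t : ℝ, t ≠ 0 → 1 / 2 ≤ t * deriv f t / f t ∧ t * deriv f t / f t ≤ 1) ∧
    (∀ t s : ℝ, t ≠ 0 → s ≠ 0 →
      t * deriv f t / f t ≤ 2 * (s * deriv f s / f s)) :=
  stmt_11_general f hf0 hf'
end
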